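/- For coprime integers 1 < n < m, the following 'blow-up' identities hold in ℚ(q): P_s^0(T_{n,m}) = (−1)^{n−1} · q^{−n(n−1)} · P_s^{n−1}(T_{n,m+n}) and P_s^0(T_{n,m}) = (−1)^{m−1} · q^{−m(m−1)} · P_s^{m−1}(T_{m,m+n}), where P_s^k(T_{n,m}) denotes the coefficient of a^{2k} in P_s(T_{n,m}). -/

import Mathlib

/-!
Work in the field ℚ(q) of rational functions in one variable `q` over ℚ.
`qNum x j` is the q-integer `[j]_x = (1 - x^j)/(1 - x)`, `qFact x j` the q-factorial,
`qBinom x n k` the Gaussian binomial coefficient (all with base `x`, so that base `q^2`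
gives the `q²`-analogues).  `Ps n m` is the rescaled HOMFLY polynomial of the `(n,m)`
torus knot, a polynomial in the variable `a` (= `Polynomial.X`) over ℚ(q), given by
Jones' formula.
-/

noncomputable def q : RatFunc ℚ := RatFunc.X

noncomputable def qNum (x : RatFunc ℚ) (j : ℕ) : RatFunc ℚ := (1 - x ^ j) / (1 - x)

noncomputable def qFact (x : RatFunc ℚ) (j : ℕ) : RatFunc ℚ :=
  ∏ i ∈ Finset.range j, qNum x (i + 1)

noncomputable def qBinom (x : RatFunc ℚ) (n k : ℕ) : RatFunc ℚ :=
  qFact x n / (qFact x k * qFact x (n - k))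

/-- Jones' formula for the rescaled HOMFLY polynomial of the `(n,m)` torus knot,
as a polynomial in `a` (= `Polynomial.X`) over `ℚ(q)`. -/
noncomputable def Ps (n m : ℕ) : Polynomial (RatFunc ℚ) :=
  Polynomial.C ((1 - q ^ 2) / (1 - q ^ (2 * n))) *
    ∑ b ∈ Finset.range n,
      Polynomial.C (q ^ (2 * m * b)) *
        (∏ i ∈ Finset.range (n - 1 - b),
          Polynomial.C ((q ^ (2 * (i + 1)) - 1)⁻¹) *
            (Polynomial.C (q ^ (2 * (i + 1))) * Polynomial.X ^ 2 - 1)) *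
        ∏ j ∈ Finset.range b,
          Polynomial.C ((1 - q ^ (2 * (j + 1)))⁻¹) *
            (Polynomial.X ^ 2 - Polynomial.C (q ^ (2 * (j + 1))))


/-!
Write `x = q²` and `(x; x)_k = (1 - x) ⋯ (1 - x^k)`. Setting `a = 0` in Jones' formula, resp.
extracting the coefficient of `a^{2(n-1)}`, leaves in both cases a sum over `i + j = n - 1` of
monomials in `x` divided by `(x; x)_i (x; x)_j`, and these agree term by term up to the factor
`(-1)^{n-1} q^{n(n-1)}` when `m` is replaced by `m + n`; this is the first identity.
By the finite q-binomial theorem the constant coefficient sums to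
`(1 - x) (x; x)_{n+m-1} / ((x; x)_n (x; x)_m)`, which is symmetric in `n` and `m`, so the second
identity is the first one with `n` and `m` exchanged.
-/

open Finset Polynomial

lemma pow_mul_prod_range {M : Type*} [CommMonoid M] (y : M) (f : ℕ → M) (n : ℕ) :
    y ^ n * ∏ i ∈ range n, f i = ∏ i ∈ range n, y * f i := by
  simpa using pow_card_mul_prod (s := range n) (f := f) (b := y)

section QBinomial

variable {K : Type*} [Field K]

/-- `(x; x)_k` in q-Pochhammer notation. -/
def qPochhammer (x : K) (k : ℕ) : K := ∏ i ∈ range k, (1 - x ^ (i + 1))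

lemma qPochhammer_succ (x : K) (k : ℕ) :
    qPochhammer x (k + 1) = qPochhammer x k * (1 - x ^ (k + 1)) :=
  prod_range_succ _ _

lemma qPochhammer_ne_zero {x : K} (hx : ∀ k, x ^ (k + 1) ≠ 1) (k : ℕ) :
    qPochhammer x k ≠ 0 :=
  prod_ne_zero_iff.mpr fun i _ ↦ sub_ne_zero.mpr (hx i).symm

/-- `∑_{i+j=N} (-y)^i x^{i(i+1)/2} / ((x; x)_i (x; x)_j)`, the weight written as a product. -/
def qBinomialSum (x y : K) (N : ℕ) : K :=
  ∑ p ∈ antidiagonal N,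
    (∏ l ∈ range p.1, -(y * x ^ (l + 1))) / (qPochhammer x p.1 * qPochhammer x p.2)

lemma prod_range_succ_neg_mul_pow (x y : K) (i : ℕ) :
    ∏ l ∈ range (i + 1), -(y * x ^ (l + 1)) =
      -(x * y) * ∏ l ∈ range i, -(x * y * x ^ (l + 1)) := by
  rw [prod_range_succ', mul_comm]
  congr 1
  · ring
  · exact prod_congr rfl fun l _ ↦ by ring

lemma pow_mul_prod_range_neg_mul_pow (x y : K) (i : ℕ) :
    x ^ i * ∏ l ∈ range i, -(y * x ^ (l + 1)) = ∏ l ∈ range i, -(x * y * x ^ (l + 1)) := by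
  rw [pow_mul_prod_range]
  exact prod_congr rfl fun l _ ↦ by ring

lemma qBinomialSum_succ {x : K} (hx : ∀ k, x ^ (k + 1) ≠ 1) (y : K) (N : ℕ) :
    (1 - x ^ (N + 1)) * qBinomialSum x y (N + 1) = (1 - x * y) * qBinomialSum x (x * y) N := by
  set T : K → ℕ × ℕ → K := fun y p ↦
    (∏ l ∈ range p.1, -(y * x ^ (l + 1))) / (qPochhammer x p.1 * qPochhammer x p.2)
  have hx₀ := qPochhammer_ne_zero hx
  have hx₁ : ∀ k, 1 - x ^ (k + 1) ≠ 0 := fun k ↦ sub_ne_zero.mpr (hx k).symm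
  -- q-Pascal: `1 - x ^ (i + j) = (1 - x ^ i) + x ^ i * (1 - x ^ j)`
  have hsplit : ∀ p ∈ antidiagonal (N + 1),
      (1 - x ^ (N + 1)) * T y p = (1 - x ^ p.1) * T y p + x ^ p.1 * (1 - x ^ p.2) * T y p := by
    intro p hp
    rw [← mem_antidiagonal.mp hp, pow_add]
    ring
  have hleft : ∀ p ∈ antidiagonal N,
      (1 - x ^ (p.1 + 1)) * T y (p.1 + 1, p.2) = -(x * y) * T (x * y) p := by
    intro p _
    simp only [T, qPochhammer_succ, prod_range_succ_neg_mul_pow]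
    field_simp [hx₀ p.1, hx₀ p.2, hx₁ p.1]
  have hright : ∀ p ∈ antidiagonal N,
      x ^ p.1 * (1 - x ^ (p.2 + 1)) * T y (p.1, p.2 + 1) = T (x * y) p := by
    intro p _
    simp only [T, qPochhammer_succ, ← pow_mul_prod_range_neg_mul_pow]
    field_simp [hx₀ p.1, hx₀ p.2, hx₁ p.2]
  rw [qBinomialSum, mul_sum, sum_congr rfl hsplit, sum_add_distrib, Nat.sum_antidiagonal_succ,
    Nat.sum_antidiagonal_succ', sum_congr rfl hleft, sum_congr rfl hright, ← mul_sum]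
  simp only [pow_zero, sub_self, zero_mul, mul_zero, zero_add]
  rw [qBinomialSum]
  ring

theorem qPochhammer_mul_qBinomialSum {x : K} (hx : ∀ k, x ^ (k + 1) ≠ 1) (y : K) (N : ℕ) :
    qPochhammer x N * qBinomialSum x y N = ∏ j ∈ range N, (1 - y * x ^ (j + 1)) := by
  induction N generalizing y with
  | zero => simp [qBinomialSum, qPochhammer]
  | succ N ih =>
    rw [qPochhammer_succ, mul_assoc, qBinomialSum_succ hx, mul_left_comm, ih, prod_range_succ',
      mul_comm (1 - x * y)]
    congr 1
    · exact prod_congr rfl fun j _ ↦ by ring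
    · ring

lemma qPochhammer_add_eq_mul_qBinomialSum {x : K} (hx : ∀ k, x ^ (k + 1) ≠ 1) (m N : ℕ) :
    qPochhammer x (m + N) = qPochhammer x m * (qPochhammer x N * qBinomialSum x (x ^ m) N) := by
  rw [qPochhammer_mul_qBinomialSum hx, qPochhammer, qPochhammer, prod_range_add]
  exact congrArg _ (prod_congr rfl fun j _ ↦ by ring)

end QBinomial

lemma q_sq_pow_succ_ne_one (k : ℕ) : (q ^ 2) ^ (k + 1) ≠ 1 := by
  rw [← pow_mul]
  intro h
  have := congrArg RatFunc.intDegree h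
  rw [q, ← RatFunc.algebraMap_X, ← map_pow, RatFunc.intDegree_polynomial,
    RatFunc.intDegree_one, natDegree_X_pow] at this
  omega

lemma coeff_zero_Ps_succ_eq_qBinomialSum (N m : ℕ) :
    (Ps (N + 1) m).coeff 0 =
      (1 - q ^ 2) / (1 - (q ^ 2) ^ (N + 1)) * qBinomialSum (q ^ 2) ((q ^ 2) ^ m) N := by
  rw [coeff_zero_eq_eval_zero]
  simp only [Ps, pow_mul, eval_mul, eval_C, eval_finsetSum, eval_prod, eval_sub, eval_pow, eval_X,
    eval_one, ne_eq, OfNat.ofNat_ne_zero, not_false_eq_true, zero_pow, mul_zero, zero_sub]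
  rw [qBinomialSum, Nat.sum_antidiagonal_eq_sum_range_succ_mk]
  congr 1
  refine sum_congr rfl fun b _ ↦ ?_
  rw [Nat.add_sub_cancel, div_eq_mul_inv, mul_inv, qPochhammer, qPochhammer, ← prod_inv_distrib,
    ← prod_inv_distrib, mul_right_comm, pow_mul_prod_range, ← mul_assoc, ← prod_mul_distrib]
  congr 1
  · exact prod_congr rfl fun l _ ↦ by ring
  · exact prod_congr rfl fun l _ ↦ by rw [← neg_sub, inv_neg]; ring

lemma coeff_zero_Ps_succ_eq_qPochhammer (N m : ℕ) :
    (Ps (N + 1) m).coeff 0 = (1 - q ^ 2) * qPochhammer (q ^ 2) (m + N) /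
      (qPochhammer (q ^ 2) (N + 1) * qPochhammer (q ^ 2) m) := by
  have hq := qPochhammer_ne_zero q_sq_pow_succ_ne_one
  rw [coeff_zero_Ps_succ_eq_qBinomialSum,
    qPochhammer_add_eq_mul_qBinomialSum q_sq_pow_succ_ne_one, qPochhammer_succ]
  field_simp [hq, sub_ne_zero.mpr (q_sq_pow_succ_ne_one N).symm]

lemma coeff_zero_Ps_comm (N M : ℕ) :
    (Ps (N + 1) (M + 1)).coeff 0 = (Ps (M + 1) (N + 1)).coeff 0 := by
  rw [coeff_zero_Ps_succ_eq_qPochhammer, coeff_zero_Ps_succ_eq_qPochhammer,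
    show M + 1 + N = N + 1 + M by omega]
  ring

lemma coeff_prod_mul_prod_of_natDegree_le {R ι κ : Type*} [CommSemiring R] (s : Finset ι)
    (t : Finset κ) (f : ι → R[X]) (g : κ → R[X]) (d : ℕ) (hf : ∀ i ∈ s, (f i).natDegree ≤ d)
    (hg : ∀ j ∈ t, (g j).natDegree ≤ d) :
    ((∏ i ∈ s, f i) * ∏ j ∈ t, g j).coeff ((#s + #t) * d) =
      (∏ i ∈ s, (f i).coeff d) * ∏ j ∈ t, (g j).coeff d := by
  rw [add_mul, coeff_mul_add_eq_of_natDegree_le, coeff_prod_of_natDegree_le s f d hf,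
    coeff_prod_of_natDegree_le t g d hg]
  · exact (natDegree_prod_le s f).trans (by simpa using sum_le_card_nsmul s _ d hf)
  · exact (natDegree_prod_le t g).trans (by simpa using sum_le_card_nsmul t _ d hg)

lemma coeff_two_mul_Ps_succ (N M : ℕ) :
    (Ps (N + 1) M).coeff (2 * N) = (1 - q ^ 2) / (1 - (q ^ 2) ^ (N + 1)) *
      ∑ p ∈ antidiagonal N, ((q ^ 2) ^ M) ^ p.1 * (∏ l ∈ range p.2, -(q ^ 2) ^ (l + 1)) /
        (qPochhammer (q ^ 2) p.1 * qPochhammer (q ^ 2) p.2) := by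
  rw [Ps, coeff_C_mul, finsetSum_coeff, Nat.sum_antidiagonal_eq_sum_range_succ_mk]
  simp only [pow_mul]
  congr 1
  refine sum_congr rfl fun b hb ↦ ?_
  rw [mul_assoc, coeff_C_mul, Nat.add_sub_cancel,
    show 2 * N = (#(range (N - b)) + #(range b)) * 2 by simp at hb ⊢; omega,
    coeff_prod_mul_prod_of_natDegree_le _ _ _ _ _ (fun _ _ ↦ by compute_degree)
      (fun _ _ ↦ by compute_degree)]
  simp only [coeff_C_mul, coeff_sub, coeff_X_pow, coeff_one, coeff_C, if_true,
    OfNat.ofNat_ne_zero, if_false, mul_one, sub_zero]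
  have hA : ∏ l ∈ range (N - b), ((q ^ 2) ^ (l + 1) - 1)⁻¹ * (q ^ 2) ^ (l + 1) =
      (∏ l ∈ range (N - b), -(q ^ 2) ^ (l + 1)) *
        ∏ l ∈ range (N - b), (1 - (q ^ 2) ^ (l + 1))⁻¹ := by
    rw [← prod_mul_distrib]
    exact prod_congr rfl fun l _ ↦ by rw [← neg_sub, inv_neg]; ring
  rw [hA, div_eq_mul_inv, mul_inv, qPochhammer, qPochhammer, ← prod_inv_distrib,
    ← prod_inv_distrib]
  ring

lemma prod_range_neg_sq_pow_succ {R : Type*} [CommRing R] (t : R) (i : ℕ) :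
    ∏ l ∈ range i, -(t ^ 2) ^ (l + 1) = (-1) ^ i * t ^ (i * (i + 1)) := by
  induction i with
  | zero => simp
  | succ i ih => rw [prod_range_succ, ih]; ring

lemma coeff_two_mul_Ps_succ_add (N m : ℕ) :
    (Ps (N + 1) (m + (N + 1))).coeff (2 * N) =
      (-1) ^ N * q ^ ((N + 1) * N) * (Ps (N + 1) m).coeff 0 := by
  rw [coeff_two_mul_Ps_succ, coeff_zero_Ps_succ_eq_qBinomialSum, qBinomialSum, mul_left_comm]
  congr 1
  rw [mul_sum]
  refine sum_congr rfl fun ⟨i, j⟩ hp ↦ ?_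
  obtain rfl : i + j = N := mem_antidiagonal.mp hp
  have hweight : ∏ l ∈ range i, -((q ^ 2) ^ m * (q ^ 2) ^ (l + 1)) =
      ((q ^ 2) ^ m) ^ i * ((-1) ^ i * q ^ (i * (i + 1))) := by
    rw [← prod_range_neg_sq_pow_succ, pow_mul_prod_range]
    simp only [mul_neg]
  have hsign : ((-1 : RatFunc ℚ) ^ i) ^ 2 = 1 := by
    rw [← pow_mul, pow_mul', neg_one_sq, one_pow]
  rw [mul_div_assoc', hweight, prod_range_neg_sq_pow_succ]
  congr 1
  linear_combination
    (-(-1) ^ j * ((q ^ 2) ^ (m + (i + j + 1))) ^ i * q ^ (j * (j + 1))) * hsign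

lemma coeff_zero_Ps_eq_coeff_two_mul (n m : ℕ) (hn : 1 ≤ n) :
    (Ps n m).coeff 0 =
      (-1) ^ (n - 1) * q ^ (-((n : ℤ) * ((n : ℤ) - 1))) * (Ps n (m + n)).coeff (2 * (n - 1)) := by
  obtain ⟨N, rfl⟩ : ∃ N, n = N + 1 := ⟨n - 1, by omega⟩
  have hq : q ^ (-(((N + 1 : ℕ) : ℤ) * ((N + 1 : ℕ) - 1))) * q ^ ((N + 1) * N) = 1 := by
    rw [zpow_neg, ← zpow_natCast]
    push_cast
    rw [add_sub_cancel_right]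
    exact inv_mul_cancel₀ (zpow_ne_zero _ RatFunc.X_ne_zero)
  rw [Nat.add_sub_cancel, coeff_two_mul_Ps_succ_add, ← mul_assoc, mul_mul_mul_comm, ← mul_pow,
    neg_one_mul, neg_neg, one_pow, one_mul, hq, one_mul]

theorem blowup_general (n m : ℕ) (hn : 1 < n) (hm : n < m) :
    (Ps n m).coeff 0 =
        (-1) ^ (n - 1) * q ^ (-((n : ℤ) * ((n : ℤ) - 1))) *
          (Ps n (m + n)).coeff (2 * (n - 1)) ∧
      (Ps n m).coeff 0 =
        (-1) ^ (m - 1) * q ^ (-((m : ℤ) * ((m : ℤ) - 1))) *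
          (Ps m (m + n)).coeff (2 * (m - 1)) := by
  refine ⟨coeff_zero_Ps_eq_coeff_two_mul n m hn.le, ?_⟩
  obtain ⟨N, rfl⟩ : ∃ N, n = N + 1 := ⟨n - 1, by omega⟩
  obtain ⟨M, rfl⟩ : ∃ M, m = M + 1 := ⟨m - 1, by omega⟩
  rw [coeff_zero_Ps_comm, add_comm (M + 1)]
  exact coeff_zero_Ps_eq_coeff_two_mul _ _ (by omega)

/-- The "blow-up" identities: for coprime `1 < n < m`,
`P_s^0(T_{n,m}) = (-1)^{n-1} q^{-n(n-1)} P_s^{n-1}(T_{n,m+n})`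
and `P_s^0(T_{n,m}) = (-1)^{m-1} q^{-m(m-1)} P_s^{m-1}(T_{m,m+n})`,
where `P_s^k` is the coefficient of `a^{2k}`. -/
theorem blowup (n m : ℕ) (hn : 1 < n) (hm : n < m) (hco : Nat.Coprime n m) :
    (Ps n m).coeff 0 =
        (-1) ^ (n - 1) * q ^ (-((n : ℤ) * ((n : ℤ) - 1))) *
          (Ps n (m + n)).coeff (2 * (n - 1)) ∧
      (Ps n m).coeff 0 =
        (-1) ^ (m - 1) * q ^ (-((m : ℤ) * ((m : ℤ) - 1))) *
          (Ps m (m + n)).coeff (2 * (m - 1)) :=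
  blowup_general n m hn hm
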